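/- Let F be a nonarchimedean local field with unramified additive character ψ and self-dual Haar measure. For every integer m > 0 and every b ∈ F^× with |b| > q^{2m}, one has ∫_{ϖ^m O} ∫_{ϖ^m O} ψ(bxy) dx dy = |b|^{-1}. -/

import Mathlib

/-!
For `c ∈ F` the map `x ↦ ψ (c * x)` is a character of the additive group
`ball j = {x | |x| ≤ q ^ j}`. It is trivial there iff `|c| ≤ q ^ (-j)`; otherwise its integral over
`ball j` vanishes, because translating by a point where the character is nontrivial multiplies the
integral by a constant `≠ 1` without changing it. With `|b| = q ^ n`, the inner integral is thus
`q ^ (-m)` on `ball (m - n)` and `0` elsewhere, and as `ball (m - n) ⊆ ball (-m)` the double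
integral is `q ^ (-m) * q ^ (m - n) = |b|⁻¹`.

The measure is only known to be invariant on images of arbitrary sets, and `ψ` is the only function
known to be measurable. Invariance still transports null measurability, by Carathéodory's
criterion, so the kernels of the characters and their countably many cosets are null measurable,
which is what the translation argument needs. Balls are null measurable by packing: a measurable
hull of `ball j` lies a.e. in the kernel of every character trivial on `ball j`; if it met a sphere
`|x| = q ^ k`, `k > j`, in positive measure, translates of that part by points at mutual distance
`q ^ k` would be almost disjoint and lie in `ball k` up to null sets, in unbounded number.
-/

open MeasureTheory

/-- A bundle of data axiomatizing a nonarchimedean local field `F` together with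
its ring of integers `O`, a uniformizer `ϖ`, residue cardinality `q`, absolute
value `abv` (normalized by `abv ϖ = q⁻¹`), an unramified additive character `ψ`
(trivial on `O`, nontrivial on `ϖ⁻¹O`), and the self-dual additive Haar measure
`μ` (with `μ O = 1`). -/
structure NonarchLocalField (F : Type) [Field F] [MeasurableSpace F] where
  μ : Measure F
  O : Subring F
  ϖ : F
  q : ℝ
  abv : F → ℝ
  ψ : F → ℂ
  one_lt_q : 1 < q
  ϖ_ne_zero : ϖ ≠ 0
  abv_zero : abv 0 = 0
  abv_pos : ∀ x : F, x ≠ 0 → 0 < abv x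
  abv_mul : ∀ x y : F, abv (x * y) = abv x * abv y
  abv_add : ∀ x y : F, abv (x + y) ≤ max (abv x) (abv y)
  abv_ϖ : abv ϖ = q⁻¹
  abv_discrete : ∀ x : F, x ≠ 0 → ∃ n : ℤ, abv x = q ^ n
  mem_O : ∀ x : F, x ∈ O ↔ abv x ≤ 1
  ψ_add : ∀ x y : F, ψ (x + y) = ψ x * ψ y
  ψ_meas : Measurable ψ
  ψ_triv : ∀ x : F, abv x ≤ 1 → ψ x = 1
  ψ_nontriv : ∃ x : F, abv x ≤ q ∧ ψ x ≠ 1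
  μ_add_invariant : ∀ (a : F) (s : Set F), μ ((a + ·) '' s) = μ s
  μ_smul : ∀ (a : F), a ≠ 0 → ∀ s : Set F, μ ((a * ·) '' s) = ENNReal.ofReal (abv a) * μ s
  μ_O : μ (O : Set F) = 1

open Set
open scoped ENNReal

section NullMeasurable

variable {α : Type*} [MeasurableSpace α] {μ : Measure α} {s : Set α}

theorem MeasureTheory.nullMeasurableSet_of_isCaratheodory [SigmaFinite μ]
    (hs : μ.toOuterMeasure.IsCaratheodory s) : NullMeasurableSet s μ := by
  rw [← inter_univ s, ← iUnion_spanningSets μ, inter_iUnion]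
  refine .iUnion fun n => ?_
  set t := s ∩ spanningSets μ n
  have ht : μ.toOuterMeasure.IsCaratheodory t := μ.toOuterMeasure.isCaratheodory_inter hs
    (le_toOuterMeasure_caratheodory μ _ (measurableSet_spanningSets μ n))
  have ht_fin : μ t ≠ ∞ :=
    ((measure_mono inter_subset_right).trans_lt (measure_spanningSets_lt_top μ n)).ne
  have hnull : μ (toMeasurable μ t \ t) = 0 := by
    have hsplit : μ (toMeasurable μ t) = μ t + μ (toMeasurable μ t \ t) := by
      simpa [inter_eq_right.2 (subset_toMeasurable μ t)] using ht (toMeasurable μ t)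
    rw [measure_toMeasurable] at hsplit
    exact (ENNReal.add_right_inj ht_fin).1 (by rw [add_zero, ← hsplit])
  rw [← sdiff_sdiff_cancel_left (subset_toMeasurable μ t)]
  exact (measurableSet_toMeasurable μ t).nullMeasurableSet.diff (.of_null hnull)

theorem MeasureTheory.NullMeasurableSet.image_equiv [SigmaFinite μ] (e : α ≃ α) {κ : ℝ≥0∞}
    (he : ∀ t, μ (e '' t) = κ * μ t) (hs : NullMeasurableSet s μ) :
    NullMeasurableSet (e '' s) μ := by
  refine nullMeasurableSet_of_isCaratheodory fun t => ?_
  calc μ t = μ (e '' (e.symm '' t)) := by rw [e.image_symm_image]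
    _ = κ * (μ (e.symm '' t ∩ s) + μ (e.symm '' t \ s)) := by
      rw [he, measure_inter_add_sdiff₀ _ hs]
    _ = μ (t ∩ e '' s) + μ (t \ e '' s) := by
      rw [mul_add, ← he, ← he, image_inter e.injective, image_sdiff e.injective,
        e.image_symm_image]

theorem MeasureTheory.measure_sdiff_eq_zero_of_subset {t A : Set α} (hsA : s ⊆ A)
    (hA : μ A ≤ μ s) (hs : μ s ≠ ∞) (hst : s ⊆ t) (ht : NullMeasurableSet t μ) :
    μ (A \ t) = 0 := by
  have h : μ s + μ (A \ t) ≤ μ s + 0 := by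
    calc μ s + μ (A \ t) ≤ μ (A ∩ t) + μ (A \ t) := by gcongr; exact subset_inter hsA hst
      _ = μ A := measure_inter_add_sdiff₀ A ht
      _ ≤ μ s + 0 := by rw [add_zero]; exact hA
  exact nonpos_iff_eq_zero.1 ((ENNReal.add_le_add_iff_left hs).1 h)

end NullMeasurable

section AddSubgroup

variable {G : Type*} [AddGroup G] {H : AddSubgroup G}

theorem AddSubgroup.image_add_left_of_mem {a : G} (ha : a ∈ H) :
    (a + ·) '' (H : Set G) = H := by
  ext x
  rw [image_add_left, mem_preimage, SetLike.mem_coe, SetLike.mem_coe,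
    H.add_mem_cancel_left (H.neg_mem ha)]

theorem QuotientAddGroup.preimage_mk_singleton_mk (g : G) :
    QuotientAddGroup.mk ⁻¹' {(g : G ⧸ H)} = (g + ·) '' (H : Set G) := by
  ext x
  rw [image_add_left, mem_preimage, mem_preimage, mem_singleton_iff, eq_comm,
    QuotientAddGroup.eq, SetLike.mem_coe]

end AddSubgroup

section QuotientIntegral

variable {G E : Type*} [AddCommGroup G] [MeasurableSpace G] [NormedAddCommGroup E]
  [NormedSpace ℝ E] [CompleteSpace E] {ν : Measure G} {H : AddSubgroup G} [Countable (G ⧸ H)]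

theorem MeasureTheory.integral_eq_tsum_quotient
    (hH : ∀ Q : G ⧸ H, NullMeasurableSet (QuotientAddGroup.mk ⁻¹' {Q}) ν) {f : G → E}
    (hf : ∀ x y : G, (x : G ⧸ H) = y → f x = f y) (hfi : Integrable f ν) :
    ∫ x, f x ∂ν = ∑' Q : G ⧸ H, ν.real (QuotientAddGroup.mk ⁻¹' {Q}) • f Q.out := by
  have hU : ⋃ Q : G ⧸ H, QuotientAddGroup.mk ⁻¹' {Q} = univ := by
    rw [← preimage_iUnion, iUnion_of_singleton, preimage_univ]
  rw [← setIntegral_univ, ← hU, integral_iUnion_ae hH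
    (fun Q Q' h => (Disjoint.preimage _ (disjoint_singleton.2 h)).aedisjoint)
    (by rw [hU]; exact hfi.integrableOn)]
  refine tsum_congr fun Q => ?_
  rw [setIntegral_congr_fun₀ (hH Q) (g := fun _ => f Q.out)
    (fun x hx => hf x _ (hx.trans Q.out_eq'.symm)), setIntegral_const]

theorem MeasureTheory.integral_add_left_eq_of_measure_preimage_mk
    (hH : ∀ Q : G ⧸ H, NullMeasurableSet (QuotientAddGroup.mk ⁻¹' {Q}) ν) (a : G)
    (hν : ∀ Q : G ⧸ H, ν (QuotientAddGroup.mk ⁻¹' {(a : G ⧸ H) + Q}) =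
      ν (QuotientAddGroup.mk ⁻¹' {Q}))
    {f : G → E} (hf : ∀ x y : G, (x : G ⧸ H) = y → f x = f y) (hfi : Integrable f ν)
    (hfai : Integrable (fun x => f (a + x)) ν) :
    ∫ x, f (a + x) ∂ν = ∫ x, f x ∂ν := by
  rw [integral_eq_tsum_quotient hH hf hfi, ← (Equiv.addLeft (a : G ⧸ H)).tsum_eq,
    integral_eq_tsum_quotient hH (fun x y h => hf _ _ (by simp [h])) hfai]
  refine tsum_congr fun Q => ?_
  rw [Equiv.coe_addLeft, measureReal_def, measureReal_def, hν,
    hf (a + Q.out) ((a : G ⧸ H) + Q).out (by rw [QuotientAddGroup.mk_add,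
      QuotientAddGroup.out_eq', QuotientAddGroup.out_eq'])]

end QuotientIntegral

namespace NonarchLocalField

variable {F : Type} [Field F] [MeasurableSpace F] (D : NonarchLocalField F)

theorem q_pos : 0 < D.q := zero_lt_one.trans D.one_lt_q

theorem abv_nonneg (x : F) : 0 ≤ D.abv x := by
  rcases eq_or_ne x 0 with rfl | hx
  exacts [D.abv_zero.ge, (D.abv_pos x hx).le]

instance isAbsoluteValue : IsAbsoluteValue D.abv where
  abv_nonneg' := D.abv_nonneg
  abv_eq_zero' {x} := ⟨fun h => by_contra fun hx => (D.abv_pos x hx).ne' h, fun h => h ▸ D.abv_zero⟩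
  abv_add' x y := (D.abv_add x y).trans <| max_le_add_of_nonneg (D.abv_nonneg x) (D.abv_nonneg y)
  abv_mul' := D.abv_mul

open IsAbsoluteValue

theorem abv_ϖ_zpow (j : ℤ) : D.abv (D.ϖ ^ j) = D.q ^ (-j) := by
  rw [← inv_zpow', ← D.abv_ϖ]
  exact map_zpow₀ (abvHom' D.abv) D.ϖ j

theorem zpow_add_one_le_abv {x : F} {j : ℤ} (h : D.q ^ j < D.abv x) :
    D.q ^ (j + 1) ≤ D.abv x := by
  have hx : x ≠ 0 := by
    rintro rfl
    exact (zpow_pos D.q_pos j).not_ge (D.abv_zero ▸ h.le)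
  obtain ⟨n, hn⟩ := D.abv_discrete x hx
  rw [hn, zpow_lt_zpow_iff_right₀ D.one_lt_q] at h
  rw [hn, zpow_le_zpow_iff_right₀ D.one_lt_q]
  omega

def ball (j : ℤ) : AddSubgroup F where
  carrier := {x | D.abv x ≤ D.q ^ j}
  add_mem' {x y} hx hy := (D.abv_add x y).trans (max_le hx hy)
  zero_mem' := by simpa only [mem_ofPred_eq, D.abv_zero] using (zpow_pos D.q_pos j).le
  neg_mem' {x} hx := by simpa only [mem_ofPred_eq, abv_neg D.abv] using hx

theorem mem_ball {j : ℤ} {x : F} : x ∈ D.ball j ↔ D.abv x ≤ D.q ^ j := Iff.rfl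

theorem ball_mono {j j' : ℤ} (h : j ≤ j') : D.ball j ≤ D.ball j' := fun _ hx =>
  hx.trans (zpow_le_zpow_right₀ D.one_lt_q.le h)

theorem exists_mem_ball_natCast (x : F) : ∃ n : ℕ, x ∈ D.ball n := by
  rcases eq_or_ne x 0 with rfl | hx
  · exact ⟨0, zero_mem _⟩
  obtain ⟨k, hk⟩ := D.abv_discrete x hx
  refine ⟨k.toNat, ?_⟩
  rw [mem_ball, hk]
  exact zpow_le_zpow_right₀ D.one_lt_q.le (Int.self_le_toNat k)

theorem image_ϖ_zpow_mul_O (j : ℤ) : (D.ϖ ^ j * ·) '' (D.O : Set F) = D.ball (-j) := by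
  ext x
  simp only [mem_image, SetLike.mem_coe, D.mem_O, mem_ball]
  constructor
  · rintro ⟨z, hz, rfl⟩
    rw [D.abv_mul, D.abv_ϖ_zpow]
    exact mul_le_of_le_one_right (zpow_pos D.q_pos _).le hz
  · intro hx
    refine ⟨D.ϖ ^ (-j) * x, ?_, ?_⟩
    · rw [D.abv_mul, D.abv_ϖ_zpow, neg_neg]
      calc D.q ^ j * D.abv x ≤ D.q ^ j * D.q ^ (-j) := by gcongr; exact (zpow_pos D.q_pos _).le
        _ = 1 := by rw [← zpow_add₀ D.q_pos.ne', add_neg_cancel, zpow_zero]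
    · rw [← mul_assoc, ← zpow_add₀ D.ϖ_ne_zero, add_neg_cancel, zpow_zero, one_mul]

theorem measure_ball (j : ℤ) : D.μ (D.ball j) = ENNReal.ofReal (D.q ^ j) := by
  have h := D.image_ϖ_zpow_mul_O (-j)
  rw [neg_neg] at h
  rw [← h, D.μ_smul _ (zpow_ne_zero _ D.ϖ_ne_zero), D.μ_O, mul_one, abv_ϖ_zpow, neg_neg]

theorem measure_ball_ne_top (j : ℤ) : D.μ (D.ball j) ≠ ∞ := by
  rw [measure_ball]; exact ENNReal.ofReal_ne_top

theorem measure_ball_pos (j : ℤ) : 0 < D.μ (D.ball j) := by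
  rw [measure_ball, ENNReal.ofReal_pos]; exact zpow_pos D.q_pos j

instance sigmaFinite : SigmaFinite D.μ where
  out' := ⟨{
    set := fun n : ℕ => toMeasurable D.μ (D.ball n)
    set_mem := fun _ => trivial
    finite := fun n => by rw [measure_toMeasurable, measure_ball]; exact ENNReal.ofReal_lt_top
    spanning := eq_univ_of_forall fun x =>
      let ⟨n, hn⟩ := D.exists_mem_ball_natCast x
      mem_iUnion.2 ⟨n, subset_toMeasurable _ _ hn⟩ }⟩

theorem nullMeasurableSet_image_add (a : F) {s : Set F} (hs : NullMeasurableSet s D.μ) :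
    NullMeasurableSet ((a + ·) '' s) D.μ :=
  hs.image_equiv (Equiv.addLeft a) (κ := 1) fun t => by simpa using D.μ_add_invariant a t

theorem nullMeasurableSet_image_mul {a : F} (ha : a ≠ 0) {s : Set F}
    (hs : NullMeasurableSet s D.μ) : NullMeasurableSet ((a * ·) '' s) D.μ :=
  hs.image_equiv (Equiv.mulLeft₀ a ha) (D.μ_smul a ha)

theorem ψ_zero : D.ψ 0 = 1 := D.ψ_triv 0 (by rw [D.abv_zero]; exact zero_le_one)

def charKer (c : F) : AddSubgroup F where
  carrier := {x | D.ψ (c * x) = 1}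
  add_mem' {x y} hx hy := by
    simp only [mem_ofPred_eq, mul_add, D.ψ_add] at hx hy ⊢
    rw [hx, hy, mul_one]
  zero_mem' := by simp only [mem_ofPred_eq, mul_zero, D.ψ_zero]
  neg_mem' {x} hx := by
    have h := D.ψ_add (-(c * x)) (c * x)
    simp only [mem_ofPred_eq] at hx ⊢
    rwa [neg_add_cancel, D.ψ_zero, hx, mul_one, eq_comm, ← mul_neg] at h

theorem mem_charKer {c x : F} : x ∈ D.charKer c ↔ D.ψ (c * x) = 1 := Iff.rfl

theorem nullMeasurableSet_charKer (c : F) : NullMeasurableSet (D.charKer c : Set F) D.μ := by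
  rcases eq_or_ne c 0 with rfl | hc
  · have : (D.charKer 0 : Set F) = univ := eq_univ_of_forall fun x => by
      simp [mem_charKer, D.ψ_zero]
    rw [this]
    exact .univ
  have : (D.charKer c : Set F) = (c⁻¹ * ·) '' (D.ψ ⁻¹' {1}) := by
    ext x
    refine ⟨fun hx => ⟨c * x, hx, inv_mul_cancel_left₀ hc x⟩, ?_⟩
    rintro ⟨y, hy, rfl⟩
    simpa [mem_charKer, mul_inv_cancel_left₀ hc] using hy
  rw [this]
  exact D.nullMeasurableSet_image_mul (inv_ne_zero hc)
    (D.ψ_meas (measurableSet_singleton 1)).nullMeasurableSet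

theorem ψ_eq_one_of_mem_ball_zero {x : F} (hx : x ∈ D.ball 0) : D.ψ x = 1 :=
  D.ψ_triv x (by simpa only [mem_ball, zpow_zero] using hx)

theorem mul_mem_ball {i j : ℤ} {x y : F} (hx : x ∈ D.ball i) (hy : y ∈ D.ball j) :
    x * y ∈ D.ball (i + j) := by
  rw [mem_ball, D.abv_mul, zpow_add₀ D.q_pos.ne']
  exact mul_le_mul hx hy (D.abv_nonneg y) (zpow_pos D.q_pos i).le

theorem ball_le_charKer_iff {c : F} {j : ℤ} : D.ball j ≤ D.charKer c ↔ c ∈ D.ball (-j) := by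
  refine ⟨fun h => ?_, fun hc x hx => D.ψ_eq_one_of_mem_ball_zero
    (by simpa using D.mul_mem_ball hc hx)⟩
  by_contra hc
  have hc' : D.q ^ (-j + 1) ≤ D.abv c := D.zpow_add_one_le_abv (not_le.1 hc)
  have hc0 : c ≠ 0 := fun h0 => hc (h0 ▸ zero_mem _)
  obtain ⟨x₀, hx₀q, hx₀⟩ := D.ψ_nontriv
  refine hx₀ ?_
  have hmem : c⁻¹ * x₀ ∈ D.ball j := by
    rw [mem_ball, D.abv_mul, abv_inv D.abv]
    calc (D.abv c)⁻¹ * D.abv x₀ ≤ (D.q ^ (-j + 1))⁻¹ * D.q :=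
          mul_le_mul (inv_anti₀ (zpow_pos D.q_pos _) hc') hx₀q (D.abv_nonneg _)
            (inv_nonneg.2 (zpow_pos D.q_pos _).le)
      _ = D.q ^ j := by
          rw [← zpow_neg, neg_add, neg_neg, zpow_add₀ D.q_pos.ne', zpow_neg_one,
            inv_mul_cancel_right₀ D.q_pos.ne']
  simpa [mem_charKer, mul_inv_cancel_left₀ hc0] using h hmem

def sphere (k : ℤ) : Set F := {x | D.abv x = D.q ^ k}

theorem sphere_subset_ball (k : ℤ) : D.sphere k ⊆ D.ball k := fun _ hx => le_of_eq hx

theorem exists_forall_add_notMem_charKer {z : F} {k : ℤ} (hz : z ∈ D.sphere k) :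
    ∃ c ∈ D.ball (1 - k), ∀ d ∈ D.ball (k - 1), z + d ∉ D.charKer c := by
  obtain ⟨x₀, hx₀q, hx₀⟩ := D.ψ_nontriv
  have hz0 : z ≠ 0 := by
    rintro rfl
    exact (zpow_pos D.q_pos k).ne' (D.abv_zero.symm.trans hz).symm
  have hz' : z⁻¹ ∈ D.ball (-k) := by
    rw [mem_ball, abv_inv D.abv, show D.abv z = D.q ^ k from hz, zpow_neg]
  have hx₀' : x₀ ∈ D.ball 1 := by rwa [mem_ball, zpow_one]
  refine ⟨x₀ * z⁻¹, by simpa [sub_eq_add_neg] using D.mul_mem_ball hx₀' hz', fun d hd hmem => ?_⟩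
  have hd' : x₀ * z⁻¹ * d ∈ D.ball 0 := by
    convert D.mul_mem_ball (D.mul_mem_ball hx₀' hz') hd using 2
    ring
  rw [mem_charKer, mul_add, D.ψ_add, D.ψ_eq_one_of_mem_ball_zero hd', mul_one,
    mul_assoc, inv_mul_cancel₀ hz0, mul_one] at hmem
  exact hx₀ hmem

theorem nullMeasurableSet_preimage_mk_charKer (c : F) (Q : F ⧸ D.charKer c) :
    NullMeasurableSet (QuotientAddGroup.mk ⁻¹' {Q}) D.μ := by
  induction Q using QuotientAddGroup.induction_on with
  | H g =>
    rw [QuotientAddGroup.preimage_mk_singleton_mk]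
    exact D.nullMeasurableSet_image_add g (D.nullMeasurableSet_charKer c)

theorem countable_quotient_charKer {c : F} (hc : c ≠ 0) : Countable (F ⧸ D.charKer c) := by
  obtain ⟨n, hn⟩ := D.abv_discrete c hc
  have hball : D.ball (-n) ≤ D.charKer c := D.ball_le_charKer_iff.2 (by rw [neg_neg, mem_ball, hn])
  have hpos : ∀ Q : F ⧸ D.charKer c, 0 < D.μ (QuotientAddGroup.mk ⁻¹' {Q}) := by
    intro Q
    induction Q using QuotientAddGroup.induction_on with
    | H g =>
      rw [QuotientAddGroup.preimage_mk_singleton_mk]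
      calc 0 < D.μ (D.ball (-n)) := D.measure_ball_pos _
        _ = D.μ ((g + ·) '' D.ball (-n)) := (D.μ_add_invariant g _).symm
        _ ≤ _ := measure_mono (image_mono hball)
  have hcount := Measure.countable_meas_pos_of_disjoint_iUnion₀
    (D.nullMeasurableSet_preimage_mk_charKer c)
    fun Q Q' h => (Disjoint.preimage _ (disjoint_singleton.2 h)).aedisjoint
  simp only [hpos, ofPred_true] at hcount
  exact countable_univ_iff.1 hcount

theorem abv_sub_eq_of_mk_ne {k : ℤ} {y y' : F} (hy : y ∈ D.sphere k) (hy' : y' ∈ D.sphere k)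
    (h : (y : F ⧸ D.ball (k - 1)) ≠ y') : D.abv (y - y') = D.q ^ k := by
  refine le_antisymm ?_ ?_
  · calc D.abv (y - y') ≤ max (D.abv y) (D.abv (-y')) := sub_eq_add_neg y y' ▸ D.abv_add _ _
      _ = D.q ^ k := by rw [abv_neg D.abv, show D.abv y = _ from hy, show D.abv y' = _ from hy',
        max_self]
  · have hlt : D.q ^ (k - 1) < D.abv (y - y') := by
      by_contra! hle
      apply h
      rwa [QuotientAddGroup.eq, mem_ball, neg_add_eq_sub, abv_sub D.abv]
    simpa using D.zpow_add_one_le_abv hlt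

section Packing

variable {D} {W : Set F} {k : ℤ}

theorem measure_inter_preimage_mk_eq_zero
    (hW : ∀ c ∈ D.ball (1 - k), D.μ (W \ D.charKer c) = 0) {z : F} (hz : z ∈ D.sphere k) :
    D.μ (W ∩ QuotientAddGroup.mk ⁻¹' {(z : F ⧸ D.ball (k - 1))}) = 0 := by
  obtain ⟨c, hc, hcz⟩ := D.exists_forall_add_notMem_charKer hz
  refine measure_mono_null ?_ (hW c hc)
  rintro x ⟨hxW, hx⟩
  rw [QuotientAddGroup.preimage_mk_singleton_mk] at hx
  obtain ⟨d, hd, rfl⟩ := hx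
  exact ⟨hxW, hcz d hd⟩

theorem card_mul_measure_inter_sphere_le (hWm : MeasurableSet W)
    (hW : ∀ c ∈ D.ball (1 - k), D.μ (W \ D.charKer c) = 0) {T : Finset F}
    (hT : ∀ y ∈ T, y ∈ D.ball k) (hsep : ∀ y ∈ T, ∀ y' ∈ T, y ≠ y' → D.abv (y - y') = D.q ^ k) :
    T.card * D.μ (W ∩ D.sphere k) ≤ ENNReal.ofReal (D.q ^ k) := by
  set X := W ∩ D.sphere k
  set V := toMeasurable D.μ (D.ball k)
  set Y := toMeasurable D.μ X ∩ (W ∩ V)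
  have hYm : MeasurableSet Y :=
    (measurableSet_toMeasurable _ _).inter (hWm.inter (measurableSet_toMeasurable _ _))
  have hμY : D.μ Y = D.μ X := by
    refine le_antisymm ((measure_mono inter_subset_left).trans (measure_toMeasurable X).le)
      (measure_mono fun x hx => ⟨subset_toMeasurable _ _ hx, hx.1,
        subset_toMeasurable _ _ (D.sphere_subset_ball k hx.2)⟩)
  have hdisj : (T : Set F).Pairwise (Function.onFun (AEDisjoint D.μ) fun y => (y + ·) '' Y) := by
    intro y hy y' hy' hne
    obtain ⟨c, hc, hcy⟩ := D.exists_forall_add_notMem_charKer (z := y - y')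
      (hsep y hy y' hy' hne)
    have hnull : ∀ a : F, D.μ ((a + ·) '' (Y \ D.charKer c)) = 0 := fun a => by
      rw [D.μ_add_invariant]
      exact measure_mono_null (sdiff_subset_sdiff_left fun x hx => hx.2.1) (hW c hc)
    refine measure_mono_null ?_ (measure_union_null (hnull y) (hnull y'))
    rintro _ ⟨⟨w, hw, rfl⟩, ⟨w', hw', hww'⟩⟩
    by_cases hwK : w ∈ D.charKer c
    · refine Or.inr ⟨w', ⟨hw', fun hw'K => ?_⟩, hww'⟩
      refine hcy 0 (zero_mem _) ?_
      have : y - y' = w' - w := by linear_combination -hww'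
      rw [add_zero, this]
      exact sub_mem hw'K hwK
    · exact Or.inl ⟨w, ⟨hw, hwK⟩, rfl⟩
  have hV : ∀ y ∈ T, D.μ ((y + ·) '' V \ V) = 0 := fun y hy =>
    measure_sdiff_eq_zero_of_subset
      (by rw [← AddSubgroup.image_add_left_of_mem (hT y hy)]
          exact image_mono (subset_toMeasurable _ _))
      (by rw [D.μ_add_invariant, measure_toMeasurable]) (D.measure_ball_ne_top k)
      (subset_toMeasurable _ _) (measurableSet_toMeasurable _ _).nullMeasurableSet
  calc T.card * D.μ X = ∑ y ∈ T, D.μ ((y + ·) '' Y) := by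
        simp only [D.μ_add_invariant, hμY, Finset.sum_const, nsmul_eq_mul]
    _ = D.μ (⋃ y ∈ T, (y + ·) '' Y) := (measure_biUnion_finset₀ hdisj fun y _ =>
        D.nullMeasurableSet_image_add y hYm.nullMeasurableSet).symm
    _ ≤ D.μ V := by
        refine measure_mono_ae (ae_le_set.2 (measure_mono_null ?_
          ((measure_biUnion_null_iff T.countable_toSet).2 hV)))
        rintro x ⟨hx, hxV⟩
        obtain ⟨y, hy, hxy⟩ := mem_iUnion₂.1 hx
        exact mem_iUnion₂.2 ⟨y, hy, image_mono (fun w hw => hw.2.2) hxy, hxV⟩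
    _ = ENNReal.ofReal (D.q ^ k) := by rw [measure_toMeasurable, measure_ball]

theorem measure_inter_sphere_eq_zero (hWm : MeasurableSet W)
    (hW : ∀ c ∈ D.ball (1 - k), D.μ (W \ D.charKer c) = 0) : D.μ (W ∩ D.sphere k) = 0 := by
  set X := W ∩ D.sphere k
  set π : F → F ⧸ D.ball (k - 1) := QuotientAddGroup.mk
  by_contra hX
  have hinf : (π '' X).Infinite := by
    intro hfin
    refine hX (measure_mono_null (t := ⋃ Q ∈ π '' X, W ∩ π ⁻¹' {Q}) ?_
      ((measure_biUnion_null_iff hfin.countable).2 ?_))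
    · exact fun x hx => mem_iUnion₂.2 ⟨π x, mem_image_of_mem π hx, hx.1, rfl⟩
    · rintro _ ⟨z, hz, rfl⟩
      exact measure_inter_preimage_mk_eq_zero hW hz.2
  -- representatives of `N` distinct cosets violate the packing bound for large `N`
  obtain ⟨N, hN⟩ := ENNReal.exists_nat_mul_gt hX ENNReal.ofReal_ne_top
  obtain ⟨u, huX, hu⟩ := exists_subset_bijOn X π
  have hu_inf : u.Infinite := fun h => hinf (hu.image_eq ▸ h.image π)
  obtain ⟨T, hTu, rfl⟩ := hu_inf.exists_subset_card_eq N
  refine (card_mul_measure_inter_sphere_le hWm hW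
    (fun y hy => D.sphere_subset_ball k (huX (hTu hy)).2) fun y hy y' hy' hne => ?_).not_gt hN
  exact D.abv_sub_eq_of_mk_ne (huX (hTu hy)).2 (huX (hTu hy')).2
    fun h => hne (hu.injOn (hTu hy) (hTu hy') h)

end Packing

theorem nullMeasurableSet_ball (j : ℤ) : NullMeasurableSet (D.ball j : Set F) D.μ := by
  set E := toMeasurable D.μ (D.ball j)
  have hE : ∀ c ∈ D.ball (-j), D.μ (E \ D.charKer c) = 0 := fun c hc =>
    measure_sdiff_eq_zero_of_subset (subset_toMeasurable _ _) (measure_toMeasurable _).le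
      (D.measure_ball_ne_top j) (D.ball_le_charKer_iff.2 hc) (D.nullMeasurableSet_charKer c)
  have hnull : D.μ (E \ D.ball j) = 0 := by
    refine measure_mono_null (t := ⋃ i : ℕ, E ∩ D.sphere (j + 1 + i)) ?_
      (measure_iUnion_null fun i => measure_inter_sphere_eq_zero (measurableSet_toMeasurable _ _)
        fun c hc => hE c (D.ball_mono (by omega) hc))
    rintro x ⟨hxE, hxB⟩
    have hx0 : x ≠ 0 := fun h => hxB (h ▸ zero_mem _)
    obtain ⟨k, hk⟩ := D.abv_discrete x hx0
    have hjk : j < k := by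
      rw [SetLike.mem_coe, mem_ball, hk, zpow_le_zpow_iff_right₀ D.one_lt_q] at hxB
      omega
    refine mem_iUnion.2 ⟨(k - j - 1).toNat, hxE, ?_⟩
    rw [sphere, mem_ofPred_eq, hk]
    congr 1
    omega
  rw [← sdiff_sdiff_cancel_left (subset_toMeasurable D.μ (D.ball j))]
  exact (measurableSet_toMeasurable _ _).nullMeasurableSet.diff (.of_null hnull)

theorem restrict_ball_image_add {j : ℤ} {a : F} (ha : a ∈ D.ball j) (t : Set F) :
    D.μ.restrict (D.ball j) ((a + ·) '' t) = D.μ.restrict (D.ball j) t := by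
  rw [Measure.restrict_apply₀' (D.nullMeasurableSet_ball j),
    Measure.restrict_apply₀' (D.nullMeasurableSet_ball j),
    ← AddSubgroup.image_add_left_of_mem ha, ← image_inter (add_right_injective a),
    D.μ_add_invariant, AddSubgroup.image_add_left_of_mem ha]

theorem integral_ball_ψ_mul_of_mem {c : F} {j : ℤ} (hc : c ∈ D.ball (-j)) :
    ∫ x in D.ball j, D.ψ (c * x) ∂D.μ = ((D.q ^ j : ℝ) : ℂ) := by
  rw [setIntegral_congr_fun₀ (D.nullMeasurableSet_ball j) (g := fun _ => 1)
      fun x hx => D.ball_le_charKer_iff.2 hc hx, setIntegral_const, measureReal_def,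
    measure_ball, ENNReal.toReal_ofReal (zpow_pos D.q_pos j).le, Complex.real_smul, mul_one]

theorem restrict_ball_preimage_mk_add {j : ℤ} {a : F} (ha : a ∈ D.ball j) {H : AddSubgroup F}
    (Q : F ⧸ H) :
    D.μ.restrict (D.ball j) (QuotientAddGroup.mk ⁻¹' {(a : F ⧸ H) + Q}) =
      D.μ.restrict (D.ball j) (QuotientAddGroup.mk ⁻¹' {Q}) := by
  induction Q using QuotientAddGroup.induction_on with
  | H g =>
    rw [← QuotientAddGroup.mk_add, QuotientAddGroup.preimage_mk_singleton_mk,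
      QuotientAddGroup.preimage_mk_singleton_mk,
      show (a + g + ·) = (a + ·) ∘ (g + ·) from funext (add_assoc a g), image_comp,
      D.restrict_ball_image_add ha]

theorem ψ_mul_eq_of_mk_eq {c x y : F} (h : (x : F ⧸ D.charKer c) = y) :
    D.ψ (c * x) = D.ψ (c * y) := by
  rw [QuotientAddGroup.eq, mem_charKer] at h
  calc D.ψ (c * x) = D.ψ (c * x) * D.ψ (c * (-x + y)) := by rw [h, mul_one]
    _ = D.ψ (c * y) := by rw [← D.ψ_add, ← mul_add, add_neg_cancel_left]

theorem integral_ball_ψ_mul_of_notMem {c : F} {j : ℤ} (hc : c ∉ D.ball (-j)) :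
    ∫ x in D.ball j, D.ψ (c * x) ∂D.μ = 0 := by
  obtain ⟨a, ha, hψa⟩ : ∃ a ∈ D.ball j, a ∉ D.charKer c :=
    SetLike.not_le_iff_exists.1 (mt D.ball_le_charKer_iff.1 hc)
  have hc0 : c ≠ 0 := by
    rintro rfl
    exact hψa (by simp [mem_charKer, D.ψ_zero])
  have := D.countable_quotient_charKer hc0
  have hmul : ∀ x, D.ψ (c * (a + x)) = D.ψ (c * a) * D.ψ (c * x) := fun x => by
    rw [mul_add, D.ψ_add]
  by_cases hi : Integrable (fun x => D.ψ (c * x)) (D.μ.restrict (D.ball j))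
  swap
  · exact integral_undef hi
  have hshift := integral_add_left_eq_of_measure_preimage_mk
    (fun Q => (D.nullMeasurableSet_preimage_mk_charKer c Q).mono Measure.restrict_le_self) a
    (D.restrict_ball_preimage_mk_add ha) (fun _ _ => D.ψ_mul_eq_of_mk_eq) hi
    (by simpa only [hmul] using hi.const_mul (D.ψ (c * a)))
  simp only [hmul, integral_const_mul] at hshift
  by_contra h
  exact hψa (D.mem_charKer.2 ((mul_eq_right₀ h).1 hshift))

theorem integral_ball_ψ_mul (c : F) (j : ℤ) :
    ∫ x in D.ball j, D.ψ (c * x) ∂D.μ =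
      (D.ball (-j) : Set F).indicator (fun _ => ((D.q ^ j : ℝ) : ℂ)) c := by
  by_cases hc : c ∈ D.ball (-j)
  · rw [indicator_of_mem hc, D.integral_ball_ψ_mul_of_mem hc]
  · rw [indicator_of_notMem hc, D.integral_ball_ψ_mul_of_notMem hc]

theorem mul_mem_ball_iff {b : F} {n : ℤ} (hb : D.abv b = D.q ^ n) (j : ℤ) (y : F) :
    b * y ∈ D.ball j ↔ y ∈ D.ball (j - n) := by
  rw [mem_ball, mem_ball, D.abv_mul, hb, zpow_sub₀ D.q_pos.ne',
    le_div_iff₀' (zpow_pos D.q_pos n)]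

theorem integral_ball_ψ_mul_mul {b : F} {n : ℤ} (hb : D.abv b = D.q ^ n) (j : ℤ) (y : F) :
    ∫ x in D.ball j, D.ψ (b * x * y) ∂D.μ =
      (D.ball (-j - n) : Set F).indicator (fun _ => ((D.q ^ j : ℝ) : ℂ)) y := by
  simp only [mul_right_comm b _ y]
  rw [D.integral_ball_ψ_mul]
  by_cases hy : y ∈ D.ball (-j - n)
  · rw [indicator_of_mem ((D.mul_mem_ball_iff hb _ _).2 hy), indicator_of_mem hy]
  · rw [indicator_of_notMem (mt (D.mul_mem_ball_iff hb _ _).1 hy), indicator_of_notMem hy]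

theorem setIntegral_ball_indicator_ball {i j : ℤ} (hij : i ≤ j) (C : ℂ) :
    ∫ y in D.ball j, (D.ball i : Set F).indicator (fun _ => C) y ∂D.μ = (D.q ^ i : ℝ) • C := by
  have hi := (D.nullMeasurableSet_ball i).mono (Measure.restrict_le_self (s := D.ball j))
  rw [integral_indicator₀ hi, Measure.restrict_restrict₀ hi, inter_eq_left.2 (D.ball_mono hij),
    setIntegral_const, measureReal_def, D.measure_ball,
    ENNReal.toReal_ofReal (zpow_pos D.q_pos _).le]

end NonarchLocalField

theorem double_integral_gaussian_pairing_general {F : Type} [Field F] [MeasurableSpace F]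
    (D : NonarchLocalField F) (m : ℕ) (b : F)
    (hbig : D.q ^ (2 * m) < D.abv b) :
    ∫ y in (fun z => D.ϖ ^ m * z) '' (D.O : Set F),
      ∫ x in (fun z => D.ϖ ^ m * z) '' (D.O : Set F), D.ψ (b * x * y) ∂D.μ ∂D.μ
      = ((D.abv b : ℂ))⁻¹ := by
  have hb : b ≠ 0 := by
    rintro rfl
    exact (pow_pos D.q_pos _).not_gt (D.abv_zero ▸ hbig)
  obtain ⟨n, hn⟩ := D.abv_discrete b hb
  have hmn : (m : ℤ) - n ≤ -m := by
    rw [hn, ← zpow_natCast, zpow_lt_zpow_iff_right₀ D.one_lt_q] at hbig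
    push_cast at hbig
    omega
  have hB : (fun z => D.ϖ ^ m * z) '' (D.O : Set F) = D.ball (-m) := by
    simpa using D.image_ϖ_zpow_mul_O m
  simp only [hB, D.integral_ball_ψ_mul_mul hn, neg_neg]
  rw [D.setIntegral_ball_indicator_ball hmn, hn, Complex.real_smul, ← Complex.ofReal_mul,
    ← zpow_add₀ D.q_pos.ne', ← Complex.ofReal_inv, ← zpow_neg]
  congr 2
  ring

/-- Equation (4.1): for `m > 0` and `|b| > q^{2m}`,
`∫_{ϖ^m O} ∫_{ϖ^m O} ψ(bxy) dx dy = |b|⁻¹`. -/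
theorem double_integral_gaussian_pairing {F : Type} [Field F] [MeasurableSpace F]
    (D : NonarchLocalField F) (m : ℕ) (hm : 0 < m) (b : F) (hb : b ≠ 0)
    (hbig : D.q ^ (2 * m) < D.abv b) :
    ∫ y in (fun z => D.ϖ ^ m * z) '' (D.O : Set F),
      ∫ x in (fun z => D.ϖ ^ m * z) '' (D.O : Set F), D.ψ (b * x * y) ∂D.μ ∂D.μ
      = ((D.abv b : ℂ))⁻¹ :=
  double_integral_gaussian_pairing_general D m b hbig
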